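/- Under the hypotheses of the analytic continuation (σ_x ≠ σ_y case), define f(m_{n+1}, q, q_{n+1}) ∈ ℝ^{2n+2} as the stacked vector of f_1^{(n+1)},...,f_{n+1}^{(n+1)} with λ = U_n(m, q_0) fixed. Then the Jacobian D_{(q, q_{n+1})} f(0, q_0, q_{0,n+1}) is block lower-triangular, with upper-left 2n×2n block equal to the Jacobian D_q f^{(n)}(m, q_0) of the n-body relative equilibrium map and lower-right 2×2 block equal to D²_{q_{n+1}} V_{Sn}(m, q_0, q_{0,n+1}); hence it is invertible whenever both blocks are invertible. -/

import Mathlib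

open scoped BigOperators RealInnerProductSpace
open Matrix Filter

noncomputable section

/-- The plane. -/
abbrev E2 : Type := EuclideanSpace ℝ (Fin 2)

/-- Action of a `2×2` matrix on a vector of the plane. -/
noncomputable def mvec (S : Matrix (Fin 2) (Fin 2) ℝ) (x : E2) : E2 :=
  (EuclideanSpace.equiv (Fin 2) ℝ).symm (S.mulVec (EuclideanSpace.equiv (Fin 2) ℝ x))

/-- The Newtonian force function `U_n`. -/
noncomputable def newtU {n : ℕ} (m : Fin n → ℝ) (q : Fin n → E2) : ℝ :=
  ∑ i : Fin n, ∑ j : Fin n, if i < j then m i * m j / ‖q j - q i‖ else 0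

/-- The gradient `∇_i U_n`. -/
noncomputable def gradU {n : ℕ} (m : Fin n → ℝ) (q : Fin n → E2) (i : Fin n) : E2 :=
  ∑ j ∈ Finset.univ.erase i, (m i * m j / ‖q j - q i‖ ^ 3) • (q j - q i)

/-- The center of mass. -/
noncomputable def com {n : ℕ} (m : Fin n → ℝ) (q : Fin n → E2) : E2 :=
  (∑ i, m i)⁻¹ • ∑ i, m i • q i

/-- Collision-free configurations, i.e. `q ∈ ℝ^{2n} \ Δ`. -/
def CollisionFree {n : ℕ} (q : Fin n → E2) : Prop := ∀ i j, i ≠ j → q i ≠ q j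

/-- Balanced configuration with respect to `S`, with parameter `lam`. -/
def IsBC {n : ℕ} (m : Fin n → ℝ) (q : Fin n → E2)
    (S : Matrix (Fin 2) (Fin 2) ℝ) (lam : ℝ) : Prop :=
  ∀ i, gradU m q i + (m i * lam) • mvec S (q i - com m q) = 0

/-- The `S`-weighted moment of inertia `I_S`. -/
noncomputable def momI {n : ℕ} (m : Fin n → ℝ) (q : Fin n → E2)
    (S : Matrix (Fin 2) (Fin 2) ℝ) : ℝ :=
  ∑ j, m j * ⟪q j - com m q, mvec S (q j - com m q)⟫

/-- The diagonal matrix `diag(σx, σy)`. -/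
def Sdiag (sx sy : ℝ) : Matrix (Fin 2) (Fin 2) ℝ := !![sx, 0; 0, sy]

/-- Relative equilibrium map `f_i^{(n)}(m,q)` for normalized configurations. -/
noncomputable def relEq {n : ℕ} (m : Fin n → ℝ) (q : Fin n → E2)
    (S : Matrix (Fin 2) (Fin 2) ℝ) (i : Fin n) : E2 :=
  (∑ j ∈ Finset.univ.erase i, (m j / ‖q j - q i‖ ^ 3) • (q j - q i)) + newtU m q • mvec S (q i)

/-- The `n`-body relative equilibrium map with the multiplier `lam` held fixed. -/
noncomputable def nBodyMap {n : ℕ} (m : Fin n → ℝ) (S : Matrix (Fin 2) (Fin 2) ℝ) (lam : ℝ)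
    (q : Fin n → E2) (i : Fin n) : E2 :=
  (∑ j ∈ Finset.univ.erase i, (m j / ‖q j - q i‖ ^ 3) • (q j - q i)) + lam • mvec S (q i)

/-- The gradient `∇_ξ V_{Sn}` of the restricted potential, with coefficient `lam`. -/
noncomputable def gradV {n : ℕ} (m : Fin n → ℝ) (S : Matrix (Fin 2) (Fin 2) ℝ) (lam : ℝ)
    (q : Fin n → E2) (ξ : E2) : E2 :=
  (∑ j, (m j / ‖q j - ξ‖ ^ 3) • (q j - ξ)) + lam • mvec S ξ

/-- The restricted potential `V_{Sn}(m, q, ξ)`. -/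
noncomputable def Vres {n : ℕ} (m : Fin n → ℝ) (q : Fin n → E2)
    (S : Matrix (Fin 2) (Fin 2) ℝ) (ξ : E2) : ℝ :=
  (∑ j, m j / ‖q j - ξ‖) + (1 / 2) * newtU m q * ⟪ξ, mvec S ξ⟫

/-- The combined `(n+1)`-body map `(f_1^{(n+1)},…,f_{n+1}^{(n+1)})` with `lam` fixed
and `ε` the small `(n+1)`-th mass. -/
noncomputable def fullMap {n : ℕ} (m : Fin n → ℝ) (S : Matrix (Fin 2) (Fin 2) ℝ) (lam : ℝ)
    (ε : ℝ) (q : Fin n → E2) (ξ : E2) : (Fin n → E2) × E2 :=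
  (fun i => (ε / ‖ξ - q i‖ ^ 3) • (ξ - q i) + nBodyMap m S lam q i, gradV m S lam q ξ)

/-- Map whose derivative at `q̃` is the Hessian-type matrix `H(q̃) = D²U_n(q̃) + λ Ŝ M`
(central-configuration case `S = σ I`). -/
noncomputable def hessMap {n : ℕ} (m : Fin n → ℝ) (sg lam : ℝ) (q : Fin n → E2)
    (i : Fin n) : E2 :=
  gradU m q i + (lam * sg * m i) • q i

/-- Rotation by `π/2` in the plane. -/
noncomputable def rotJ (x : E2) : E2 := mvec !![(0 : ℝ), -1; 1, 0] x

/-! At zero mass the first `n` equations do not see the last body, so the Jacobian is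
block lower-triangular, with diagonal blocks the `n`-body Jacobian and the Hessian of the
restricted potential. A block-triangular map with bijective diagonal blocks is bijective:
solve for the first block, then for the second. -/

section BlockTriangular

variable {F M N M' N' : Type*} [AddCommMonoid M] [AddCommMonoid N]
  [AddCommGroup M'] [AddCommGroup N'] [FunLike F (M × N) (M' × N')]
  [AddMonoidHomClass F (M × N) (M' × N')]

theorem bijective_of_blockLowerTriangular {L : F} {A : M → M'} {B : N → N'}
    (hLA : ∀ v w, (L (v, w)).1 = A v) (hLB : ∀ w, (L (0, w)).2 = B w)
    (hA : Function.Bijective A) (hB : Function.Bijective B) : Function.Bijective L := by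
  have hsnd : ∀ v w, (L (v, w)).2 = (L (v, 0)).2 + B w := by
    intro v w
    rw [← hLB, ← Prod.snd_add, ← map_add, Prod.mk_add_mk, add_zero, zero_add]
  constructor
  · rintro ⟨v, w⟩ ⟨v', w'⟩ h
    obtain rfl : v = v' := hA.1 <| by rw [← hLA v w, ← hLA v' w', h]
    obtain rfl : w = w' := hB.1 <| add_left_cancel <| by rw [← hsnd, ← hsnd, h]
    rfl
  · rintro ⟨a, b⟩
    obtain ⟨v, rfl⟩ := hA.2 a
    obtain ⟨w, hw⟩ := hB.2 (b - (L (v, 0)).2)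
    refine ⟨(v, w), Prod.ext (hLA v w) ?_⟩
    rw [hsnd, hw, add_sub_cancel]

end BlockTriangular

section PartialDerivatives

variable {E F E' F' : Type*} [NormedAddCommGroup E] [NormedSpace ℝ E]
  [NormedAddCommGroup F] [NormedSpace ℝ F] [NormedAddCommGroup E'] [NormedSpace ℝ E']
  [NormedAddCommGroup F'] [NormedSpace ℝ F']

theorem HasFDerivAt.fst_apply_eq_of_fst_indep {f : E → E'} {g : E × F → F'}
    {L : E × F →L[ℝ] E' × F'} {A : E →L[ℝ] E'} {x : E} {y : F}
    (hL : HasFDerivAt (fun p => (f p.1, g p)) L (x, y)) (hA : HasFDerivAt f A x)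
    (v : E) (w : F) : (L (v, w)).1 = A v := by
  have hfst : HasFDerivAt (fun p : E × F => f p.1) (A.comp (.fst ℝ E F)) (x, y) :=
    hA.comp (x, y) hasFDerivAt_fst
  exact congrArg (fun T : E × F →L[ℝ] E' => T (v, w)) (hL.fst.unique hfst)

theorem HasFDerivAt.snd_apply_inr_eq {G : E × F → E' × F'} {L : E × F →L[ℝ] E' × F'}
    {B : F →L[ℝ] F'} {x : E} {y : F} (hL : HasFDerivAt G L (x, y))
    (hB : HasFDerivAt (fun ξ => (G (x, ξ)).2) B y) (w : F) : (L (0, w)).2 = B w :=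
  congrArg (fun T : F →L[ℝ] F' => T w)
    ((hL.comp y (hasFDerivAt_prodMk_right x y)).snd.unique hB)

end PartialDerivatives

theorem fullMap_zero {n : ℕ} (m : Fin n → ℝ) (S : Matrix (Fin 2) (Fin 2) ℝ) (lam : ℝ)
    (q : Fin n → E2) (ξ : E2) :
    fullMap m S lam 0 q ξ = (nBodyMap m S lam q, gradV m S lam q ξ) := by
  simp only [fullMap, zero_div, zero_smul, zero_add]

theorem stmt17_general {n : ℕ} (m : Fin n → ℝ) (sx sy : ℝ) (q0 : Fin n → E2) (q01 : E2) (lam : ℝ)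
    (A : (Fin n → E2) →L[ℝ] (Fin n → E2))
    (hA : HasFDerivAt (fun q => nBodyMap m (Sdiag sx sy) lam q) A q0)
    (B : E2 →L[ℝ] E2)
    (hB : HasFDerivAt (fun ξ => gradV m (Sdiag sx sy) lam q0 ξ) B q01)
    (L : ((Fin n → E2) × E2) →L[ℝ] ((Fin n → E2) × E2))
    (hL : HasFDerivAt
      (fun p : (Fin n → E2) × E2 => fullMap m (Sdiag sx sy) lam 0 p.1 p.2)
      L (q0, q01)) :
    (∀ (v : Fin n → E2) (w : E2), (L (v, w)).1 = A v) ∧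
      (∀ w : E2, (L ((0 : Fin n → E2), w)).2 = B w) ∧
      (Function.Bijective A → Function.Bijective B → Function.Bijective L) := by
  have hLB : ∀ w : E2, (L ((0 : Fin n → E2), w)).2 = B w := hL.snd_apply_inr_eq hB
  simp only [fullMap_zero] at hL
  have hLA : ∀ (v : Fin n → E2) (w : E2), (L (v, w)).1 = A v :=
    hL.fst_apply_eq_of_fst_indep hA
  exact ⟨hLA, hLB, bijective_of_blockLowerTriangular hLA hLB⟩

/-- at `m_{n+1} = 0` the Jacobian of the combined `(n+1)`-body map is
block lower-triangular, with blocks the Jacobian of the `n`-body map and the Hessian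
of the restricted potential; it is invertible when both blocks are. -/
theorem stmt17 {n : ℕ} (m : Fin n → ℝ) (hm : ∀ i, 0 < m i)
    (sx sy : ℝ) (hx : 0 < sx) (hy : 0 < sy) (hxy : sx ≠ sy)
    (q0 : Fin n → E2) (hq0 : CollisionFree q0)
    (q01 : E2) (hsep : ∀ i, q01 ≠ q0 i)
    (lam : ℝ) (hlam : lam = newtU m q0)
    (A : (Fin n → E2) →L[ℝ] (Fin n → E2))
    (hA : HasFDerivAt (fun q => nBodyMap m (Sdiag sx sy) lam q) A q0)
    (B : E2 →L[ℝ] E2)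
    (hB : HasFDerivAt (fun ξ => gradV m (Sdiag sx sy) lam q0 ξ) B q01)
    (L : ((Fin n → E2) × E2) →L[ℝ] ((Fin n → E2) × E2))
    (hL : HasFDerivAt
      (fun p : (Fin n → E2) × E2 => fullMap m (Sdiag sx sy) lam 0 p.1 p.2)
      L (q0, q01)) :
    (∀ (v : Fin n → E2) (w : E2), (L (v, w)).1 = A v) ∧
      (∀ w : E2, (L ((0 : Fin n → E2), w)).2 = B w) ∧
      (Function.Bijective A → Function.Bijective B → Function.Bijective L) :=
  stmt17_general m sx sy q0 q01 lam A hA B hB L hL
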